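/- arXiv:1911.10650 — 6 statements merged into one kernel-verified Lean document; each statement's English description precedes it below -/
import Mathlib

section
/- For all n ≥ 2, the sum over j from 0 to floor(n/2) of (-1)^j * binomial(n, 2j) * G_{2n-2j} equals 0, where G_{2k} are the Genocchi numbers of the first kind. -/
/-!
Let `L : ℚ[X] → ℚ` be the linear functional `X ^ k ↦ B_k` (the Bernoulli umbra). It satisfies
`L (p (X + 1)) = L p + p.coeff 1`, `L (p (-X)) = L (p (X + 1))`, and the multiplication formula
`L (p (2X)) + L (p (2X + 1)) = 2 L p`. The polynomial `A = X ^ n (X + 1) ^ n` is invariant under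
`X ↦ -X - 1` and, for `n ≥ 2`, has no linear term, so these give
`L (A (2X)) + L (A (-2X)) = 2 L (A (-X)) = L A + L (A (-X))`.
Expanding `A (cX) = ∑ i, C(n, i) c ^ (n + i) X ^ (n + i)` turns this into
`∑ i, C(n, i) (2 ^ (n + i) + (-2) ^ (n + i) - 1 - (-1) ^ (n + i)) B_{n + i} = 0`: the terms with
`n + i` odd vanish, and for `n + i = 2 (n - j)` the weight is `2 (4 ^ (n - j) - 1)`, which makes the
term `± C(n, 2j) G_{2n-2j}`.
-/

/-- Genocchi numbers of the first kind: `genocchi n = G_{2n}`,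
via `G_{2n} = (-1)^{n+1} 2 (4^n - 1) B_{2n}`. -/
noncomputable def genocchi (n : ℕ) : ℚ :=
  (-1) ^ (n + 1) * 2 * (4 ^ n - 1) * bernoulli (2 * n)

open Finset Nat

namespace PowerSeries

theorem coeff_mk_div_factorial_mul_exp (a : ℕ → ℚ) (k : ℕ) :
    coeff k ((mk fun j => a j / j !) * exp ℚ) = (∑ j ∈ range (k + 1), k.choose j * a j) / k ! := by
  rw [coeff_mul, Finset.Nat.sum_antidiagonal_eq_sum_range_succ_mk, sum_div]
  refine sum_congr rfl fun j hj => ?_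
  have hjk : j ≤ k := Nat.lt_succ_iff.mp (mem_range.mp hj)
  rw [coeff_mk, coeff_exp, Nat.cast_choose ℚ hjk]
  simp only [Algebra.algebraMap_self, RingHom.id_apply]
  field_simp

theorem rescale_two_bernoulliPowerSeries_mul_exp_add_one :
    rescale (2 : ℚ) (bernoulliPowerSeries ℚ) * (exp ℚ + 1) = 2 * bernoulliPowerSeries ℚ := by
  have hexp : exp ℚ - 1 ≠ 0 := fun h => by
    simpa [coeff_exp] using congrArg (coeff 1) h
  refine mul_right_cancel₀ hexp ?_
  calc rescale (2 : ℚ) (bernoulliPowerSeries ℚ) * (exp ℚ + 1) * (exp ℚ - 1)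
      = rescale (2 : ℚ) (bernoulliPowerSeries ℚ * (exp ℚ - 1)) := by
        rw [map_mul, map_sub, map_one, ← Nat.cast_ofNat, ← exp_pow_eq_rescale_exp]; ring
    _ = 2 * bernoulliPowerSeries ℚ * (exp ℚ - 1) := by
        rw [bernoulliPowerSeries_mul_exp_sub_one, rescale_X, mul_assoc,
          bernoulliPowerSeries_mul_exp_sub_one, map_ofNat]

end PowerSeries

theorem sum_choose_mul_two_pow_mul_bernoulli (k : ℕ) :
    ∑ i ∈ range (k + 1), k.choose i * 2 ^ i * bernoulli i = (2 - 2 ^ k) * bernoulli k := by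
  have h := congrArg (PowerSeries.coeff k)
    PowerSeries.rescale_two_bernoulliPowerSeries_mul_exp_add_one
  have hres : PowerSeries.rescale (2 : ℚ) (bernoulliPowerSeries ℚ)
      = PowerSeries.mk fun j => 2 ^ j * bernoulli j / j ! := by
    ext j; simp [bernoulliPowerSeries, PowerSeries.coeff_rescale, mul_div_assoc]
  rw [mul_add, mul_one, map_add, hres, PowerSeries.coeff_mk_div_factorial_mul_exp] at h
  rw [← map_ofNat PowerSeries.C, PowerSeries.coeff_C_mul, bernoulliPowerSeries] at h
  simp only [PowerSeries.coeff_mk, Algebra.algebraMap_self, RingHom.id_apply] at h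
  field_simp at h
  linear_combination h

theorem bernoulli'_eq_bernoulli_add (k : ℕ) :
    bernoulli' k = bernoulli k + if k = 1 then 1 else 0 := by
  rcases eq_or_ne k 1 with rfl | hk
  · norm_num
  · rw [bernoulli_eq_bernoulli'_of_ne_one hk, if_neg hk, add_zero]

namespace Polynomial

noncomputable def bernoulliUmbra : ℚ[X] →ₗ[ℚ] ℚ :=
  lsum fun k => LinearMap.toSpanSingleton ℚ ℚ (_root_.bernoulli k)

local notation "L" => bernoulliUmbra

theorem bernoulliUmbra_monomial (k : ℕ) (a : ℚ) : L (monomial k a) = a * _root_.bernoulli k := by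
  simp [bernoulliUmbra, sum_monomial_index, smul_eq_mul]

theorem bernoulliUmbra_C_mul (a : ℚ) (p : ℚ[X]) : L (C a * p) = a * L p := by
  rw [← smul_eq_C_mul, map_smul, smul_eq_mul]

theorem bernoulliUmbra_C_mul_X_add_C_pow (b c : ℚ) (k : ℕ) :
    L ((C b * X + C c) ^ k)
      = ∑ i ∈ range (k + 1), k.choose i * b ^ i * c ^ (k - i) * _root_.bernoulli i := by
  rw [add_pow, map_sum]
  refine sum_congr rfl fun i _ => ?_
  rw [mul_pow, ← C_pow, ← C_pow, ← map_natCast C, mul_comm (C (b ^ i)), mul_assoc, mul_assoc,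
    ← C_mul, ← C_mul, mul_comm, C_mul_X_pow_eq_monomial, bernoulliUmbra_monomial]
  ring

theorem bernoulliUmbra_C_mul_X_pow (b : ℚ) (k : ℕ) :
    L ((C b * X) ^ k) = b ^ k * _root_.bernoulli k := by
  rw [mul_pow, ← C_pow, C_mul_X_pow_eq_monomial, bernoulliUmbra_monomial]

theorem bernoulliUmbra_X_add_one_pow (k : ℕ) : L ((X + 1) ^ k) = bernoulli' k := by
  have h := bernoulliUmbra_C_mul_X_add_C_pow 1 1 k
  rw [C_1, one_mul] at h
  rw [h, sum_range_succ, bernoulli'_eq_bernoulli_add]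
  simp [add_comm]

theorem bernoulliUmbra_comp_X_add_one (p : ℚ[X]) : L (p.comp (X + 1)) = L p + p.coeff 1 := by
  induction p using Polynomial.induction_on' with
  | add p q hp hq => rw [add_comp, map_add, map_add, hp, hq, coeff_add]; ring
  | monomial k a =>
    rw [monomial_comp, bernoulliUmbra_C_mul, bernoulliUmbra_X_add_one_pow, bernoulliUmbra_monomial,
      coeff_monomial, bernoulli'_eq_bernoulli_add]
    split_ifs <;> ring

theorem bernoulliUmbra_comp_neg_X (p : ℚ[X]) : L (p.comp (-X)) = L (p.comp (X + 1)) := by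
  induction p using Polynomial.induction_on' with
  | add p q hp hq => rw [add_comp, add_comp, map_add, map_add, hp, hq]
  | monomial k a =>
    rw [monomial_comp, monomial_comp, bernoulliUmbra_C_mul, bernoulliUmbra_C_mul,
      bernoulliUmbra_X_add_one_pow, ← neg_one_mul, ← C_1, ← C_neg, bernoulliUmbra_C_mul_X_pow,
      bernoulli'_eq_bernoulli]

theorem bernoulliUmbra_comp_two_mul_X_add_comp_two_mul_X_add_one (p : ℚ[X]) :
    L (p.comp (C 2 * X)) + L (p.comp (C 2 * X + C 1)) = 2 * L p := by
  induction p using Polynomial.induction_on' with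
  | add p q hp hq => simp only [add_comp, map_add]; linear_combination hp + hq
  | monomial k a =>
    rw [monomial_comp, monomial_comp, bernoulliUmbra_C_mul, bernoulliUmbra_C_mul,
      bernoulliUmbra_C_mul_X_pow, bernoulliUmbra_C_mul_X_add_C_pow, bernoulliUmbra_monomial]
    simp only [one_pow, mul_one]
    rw [sum_choose_mul_two_pow_mul_bernoulli]
    ring

theorem bernoulliUmbra_comp_two_mul_X_add_comp_neg_two_mul_X {p : ℚ[X]}
    (hp : p.comp (-X - 1) = p) :
    L (p.comp (C 2 * X)) + L (p.comp (C (-2) * X)) = 2 * L (p.comp (-X)) := by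
  have h := bernoulliUmbra_comp_two_mul_X_add_comp_two_mul_X_add_one (p.comp (-X))
  have hneg : (p.comp (-X)).comp (C 2 * X) = p.comp (C (-2) * X) := by
    rw [comp_assoc, neg_comp, X_comp, C_neg, neg_mul]
  have hshift : (p.comp (-X)).comp (C 2 * X + C 1) = p.comp (C 2 * X) := by
    conv_rhs => rw [← hp, comp_assoc, sub_comp, neg_comp, X_comp, one_comp]
    rw [comp_assoc, neg_comp, X_comp, C_1, neg_add']
  rwa [hneg, hshift, add_comm] at h

theorem X_pow_mul_X_add_one_pow_comp_neg_X_sub_one (n : ℕ) :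
    (X ^ n * (X + 1) ^ n : ℚ[X]).comp (-X - 1) = X ^ n * (X + 1) ^ n := by
  rw [mul_comp, pow_comp, pow_comp, X_comp, add_comp, X_comp, one_comp, ← mul_pow, ← mul_pow]
  ring

theorem bernoulliUmbra_X_pow_mul_X_add_one_pow_comp_C_mul_X (n : ℕ) (c : ℚ) :
    L ((X ^ n * (X + 1) ^ n).comp (C c * X))
      = ∑ i ∈ range (n + 1), n.choose i * c ^ (n + i) * _root_.bernoulli (n + i) := by
  rw [mul_comp, pow_comp, pow_comp, X_comp, add_comp, X_comp, one_comp, add_pow, mul_sum, map_sum]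
  refine sum_congr rfl fun i _ => ?_
  rw [one_pow, mul_one, ← mul_assoc, ← pow_add, ← map_natCast C, mul_comm, bernoulliUmbra_C_mul,
    bernoulliUmbra_C_mul_X_pow]
  ring

theorem _root_.sum_choose_mul_bernoulli_eq_zero {n : ℕ} (hn : 2 ≤ n) :
    ∑ i ∈ range (n + 1), n.choose i * (2 ^ (n + i) + (-2) ^ (n + i) - 1 - (-1) ^ (n + i))
      * _root_.bernoulli (n + i) = 0 := by
  set A : ℚ[X] := X ^ n * (X + 1) ^ n
  have hsymm : L (A.comp (C 2 * X)) + L (A.comp (C (-2) * X)) = 2 * L (A.comp (-X)) :=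
    bernoulliUmbra_comp_two_mul_X_add_comp_neg_two_mul_X
      (X_pow_mul_X_add_one_pow_comp_neg_X_sub_one n)
  have hneg : L (A.comp (-X)) = L A := by
    rw [bernoulliUmbra_comp_neg_X, bernoulliUmbra_comp_X_add_one, coeff_X_pow_mul',
      if_neg (by omega), add_zero]
  have hexpand : ∑ i ∈ range (n + 1),
      n.choose i * (2 ^ (n + i) + (-2) ^ (n + i) - 1 - (-1) ^ (n + i)) * _root_.bernoulli (n + i)
      = L (A.comp (C 2 * X)) + L (A.comp (C (-2) * X)) - L (A.comp (C 1 * X))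
        - L (A.comp (C (-1) * X)) := by
    simp only [A, bernoulliUmbra_X_pow_mul_X_add_one_pow_comp_C_mul_X, ← sum_add_distrib,
      ← sum_sub_distrib]
    exact sum_congr rfl fun i _ => by ring
  have hneg_one : A.comp (C (-1) * X) = A.comp (-X) := by rw [C_neg, C_1, neg_one_mul]
  rw [hexpand, hsymm, C_1, one_mul, comp_X, hneg_one, hneg]
  ring

end Polynomial

theorem sum_range_div_two_succ_sub_two_mul {M : Type*} [AddCommMonoid M] (n : ℕ) (f : ℕ → M)
    (hf : ∀ i ≤ n, Odd (n + i) → f i = 0) :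
    ∑ j ∈ range (n / 2 + 1), f (n - 2 * j) = ∑ i ∈ range (n + 1), f i := by
  rw [← sum_image fun x hx y hy (h : n - 2 * x = n - 2 * y) => by simp at hx hy; omega]
  refine sum_subset (fun i hi => ?_) fun i hi hni => hf i ?_ ?_
  · simp only [mem_image, mem_range] at hi ⊢; omega
  · simp only [mem_range] at hi; omega
  · simp only [mem_image, mem_range, not_exists, not_and] at hi hni
    by_contra heven
    exact hni ((n - i) / 2) (by omega) (by rw [Nat.not_odd_iff_even, Nat.even_iff] at heven; omega)

theorem seidel_identity (n : ℕ) (hn : 2 ≤ n) :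
    ∑ j ∈ Finset.range (n / 2 + 1),
      (-1 : ℚ) ^ j * (n.choose (2 * j)) * genocchi (n - j) = 0 := by
  set f : ℕ → ℚ := fun i =>
    n.choose i * (2 ^ (n + i) + (-2) ^ (n + i) - 1 - (-1) ^ (n + i)) * bernoulli (n + i)
  have hodd : ∀ i ≤ n, Odd (n + i) → f i = 0 := fun i _ h => by
    simp [f, h.neg_pow]
  have hterm : ∀ j ∈ range (n / 2 + 1),
      (-1 : ℚ) ^ j * n.choose (2 * j) * genocchi (n - j) = (-1) ^ (n + 1) * f (n - 2 * j) := by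
    intro j hj
    have hj : 2 * j ≤ n := by rw [mem_range] at hj; omega
    have hsign : (-1 : ℚ) ^ j * (-1) ^ (n - j + 1) = (-1) ^ (n + 1) := by
      rw [← pow_add, ← add_assoc, Nat.add_sub_cancel' (by omega : j ≤ n)]
    simp only [f, genocchi, Nat.choose_symm hj, show n + (n - 2 * j) = 2 * (n - j) by omega,
      (even_two_mul _).neg_pow, pow_mul, ← hsign]
    ring
  rw [sum_congr rfl hterm, ← mul_sum, sum_range_div_two_succ_sub_two_mul n f hodd,
    sum_choose_mul_bernoulli_eq_zero hn, mul_zero]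
end

section
/- For all n ≥ 1, the Genocchi numbers of the second kind satisfy H_{2n-1} = sum over j from 0 to floor((n-1)/2) of (-1)^j * binomial(n, 2j+1) * G_{2n-2j}. -/
/-- The Seidel triangle: `seidel n j` is the entry `g_{n,j}`.
`g_{1,1} = 1`, `g_{n,2j} = ∑_{q ≥ n} g_{q,2j-1}` (the column `2j-1` vanishes
above row `j`, so the sum is over `n ≤ q ≤ j`), and
`g_{n,2j+1} = ∑_{q ≤ n} g_{q,2j}`. -/
def seidel : ℕ → ℕ → ℤ
  | _, 0 => 0
  | n, 1 => if n = 1 then 1 else 0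
  | n, j + 2 =>
      if (j + 2) % 2 = 0 then ∑ q ∈ Finset.Icc n ((j + 2) / 2), seidel q (j + 1)
      else ∑ q ∈ Finset.Icc 1 n, seidel q (j + 1)
  termination_by n j => j

/-- Genocchi numbers of the first kind: `G_{2n} = g_{n,2n-1}`. -/
def genocchiFirst (n : ℕ) : ℤ := seidel n (2 * n - 1)

/-- Genocchi numbers of the second kind: `H_{2n-1} = g_{1,2n}`. -/
def genocchiSecond (n : ℕ) : ℤ := seidel 1 (2 * n)

open Finset

lemma seidel_one (k : ℕ) : seidel k 1 = if k = 1 then 1 else 0 := by rw [seidel]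

lemma seidel_even (m k : ℕ) : seidel k (2*m+2) = ∑ q ∈ Finset.Icc k (m+1), seidel q (2*m+1) := by
  rw [show 2*m+2 = (2*m)+2 by ring, seidel]
  simp [Nat.mul_mod_right, Nat.mul_add_div]

lemma seidel_odd (m k : ℕ) : seidel k (2*m+3) = ∑ q ∈ Finset.Icc 1 k, seidel q (2*m+2) := by
  rw [show 2*m+3 = (2*m+1)+2 by ring, seidel]
  have : (2*m+1+2)%2 = 1 := by omega
  simp [this]

/-- `F n k = g_{k, 2n+1}`. -/
def F (n k : ℕ) : ℤ := seidel k (2*n+1)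

lemma F_zero (k : ℕ) : F 0 k = if k = 1 then 1 else 0 := seidel_one k

lemma swap_lemma (k N : ℕ) (a : ℕ → ℤ) :
    ∑ q ∈ Icc 1 k, ∑ r ∈ Icc q N, a r = ∑ r ∈ Icc 1 N, (min r k : ℤ) * a r := by
  have h1 : ∀ q ∈ Icc 1 k, ∑ r ∈ Icc q N, a r = ∑ r ∈ Icc 1 N, if q ≤ r then a r else 0 := by
    intro q hq
    simp only [mem_Icc] at hq
    rw [← Finset.sum_filter]
    congr 1
    ext r
    simp only [mem_filter, mem_Icc]
    omega
  rw [Finset.sum_congr rfl h1, Finset.sum_comm]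
  refine Finset.sum_congr rfl fun r hr => ?_
  rw [← Finset.sum_filter]
  have : (Icc 1 k).filter (fun q => q ≤ r) = Icc 1 (min k r) := by
    ext q; simp only [mem_filter, mem_Icc]; omega
  rw [this, Finset.sum_const, Nat.card_Icc, min_comm]
  have : min r k + 1 - 1 = min r k := by omega
  rw [this, nsmul_eq_mul, Nat.cast_min]

lemma F_succ (n k : ℕ) : F (n+1) k = ∑ r ∈ Icc 1 (n+1), (min r k : ℤ) * F n r := by
  show seidel k (2*(n+1)+1) = _
  rw [show 2*(n+1)+1 = 2*n+3 by ring, seidel_odd]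
  rw [← swap_lemma]
  exact Finset.sum_congr rfl fun q _ => seidel_even n q

lemma sum_k_choose (r m : ℕ) :
    ∑ k ∈ Icc 1 r, (k : ℤ) * (k.choose m) =
      r * ((r+1).choose (m+1)) - ((r+1).choose (m+2)) := by
  induction r with
  | zero => simp [Nat.choose_eq_zero_of_lt]
  | succ r ih =>
    rw [Finset.sum_Icc_succ_top (by omega), ih,
      show (r+1+1).choose (m+1) = (r+1).choose m + (r+1).choose (m+1) from Nat.choose_succ_succ' _ _,
      show (r+1+1).choose (m+2) = (r+1).choose (m+1) + (r+1).choose (m+2) from Nat.choose_succ_succ' _ _]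
    push_cast
    ring

lemma key_sum (n r m : ℕ) (h : r ≤ n) :
    ∑ k ∈ Icc 1 n, (k.choose m : ℤ) * (min k r) =
      r * ((n+1).choose (m+1)) - ((r+1).choose (m+2)) := by
  induction n with
  | zero =>
    have : r = 0 := by omega
    simp [this, Nat.choose_eq_zero_of_lt]
  | succ n ih =>
    rcases Nat.eq_or_lt_of_le h with h' | h'
    · -- n+1 = r : min k r = k on Icc 1 (n+1)
      subst h'
      have : ∀ k ∈ Icc 1 (n+1), (k.choose m : ℤ) * (min k (n+1)) = (k : ℤ) * (k.choose m) := by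
        intro k hk
        simp only [mem_Icc] at hk
        rw [min_eq_left (by omega)]
        ring
      rw [Finset.sum_congr rfl this, sum_k_choose]
    · have hr : r ≤ n := by omega
      rw [Finset.sum_Icc_succ_top (by omega), ih hr, min_eq_right (by omega),
        show (n+1+1).choose (m+1) = (n+1).choose m + (n+1).choose (m+1) from Nat.choose_succ_succ' _ _]
      push_cast
      ring

/-- `Mm n m = ∑_{k=1}^{n+1} C(k,m) g_{k,2n+1}`, the binomial moments of column `2n+1`. -/
def Mm (n m : ℕ) : ℤ := ∑ k ∈ Icc 1 (n+1), (k.choose m : ℤ) * F n k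

/-- `Gg n = G_{2(n+1)}`. -/
def Gg (n : ℕ) : ℤ := F n (n+1)

lemma Gg_sum (n : ℕ) : Gg (n+1) = ∑ r ∈ Icc 1 (n+1), (r : ℤ) * F n r := by
  rw [Gg, F_succ]
  refine Finset.sum_congr rfl fun r hr => ?_
  simp only [mem_Icc] at hr
  rw [min_eq_left (by omega)]

lemma Gg_eq_Mm_one (n : ℕ) : Gg (n+1) = Mm n 1 := by
  rw [Gg_sum, Mm]
  exact Finset.sum_congr rfl fun r _ => by rw [Nat.choose_one_right]

lemma Mm_rec (n m : ℕ) :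
    Mm (n+1) m = ((n+3).choose (m+1)) * Gg (n+1) - Mm n (m+1) - Mm n (m+2) := by
  have step1 : Mm (n+1) m
      = ∑ r ∈ Icc 1 (n+1), (∑ k ∈ Icc 1 (n+2), (k.choose m : ℤ) * (min k r)) * F n r := by
    rw [Mm]
    simp only [F_succ, Finset.mul_sum]
    rw [Finset.sum_comm]
    refine Finset.sum_congr rfl fun r _ => ?_
    rw [Finset.sum_mul]
    refine Finset.sum_congr rfl fun k _ => ?_
    have hmin : ((min k r : ℕ) : ℤ) = min (r:ℤ) (k:ℤ) := by
      push_cast [Nat.cast_min]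
      exact min_comm _ _
    rw [hmin]
    ring
  rw [step1]
  have step2 : ∀ r ∈ Icc 1 (n+1),
      (∑ k ∈ Icc 1 (n+2), (k.choose m : ℤ) * (min k r)) * F n r
      = ((n+3).choose (m+1) : ℤ) * ((r:ℤ) * F n r)
        - ((r.choose (m+1) : ℤ) * F n r) - ((r.choose (m+2) : ℤ) * F n r) := by
    intro r hr
    simp only [mem_Icc] at hr
    rw [key_sum (n+2) r m (by omega),
      show (r+1).choose (m+2) = r.choose (m+1) + r.choose (m+2) from Nat.choose_succ_succ' _ _,
      show n+2+1 = n+3 from rfl]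
    push_cast
    ring
  rw [Finset.sum_congr rfl step2]
  rw [Finset.sum_sub_distrib, Finset.sum_sub_distrib, ← Finset.mul_sum, ← Gg_sum]
  rfl

lemma Mm_zero_col (m : ℕ) : Mm 0 m = ((1:ℕ).choose m : ℤ) := by
  rw [Mm]
  simp [F_zero]

lemma choose_three (m : ℕ) : (3:ℕ).choose (m+3) = (1:ℕ).choose (m+1) + (1:ℕ).choose (m+2) := by
  match m with
  | 0 => rfl
  | (m+1) => simp [Nat.choose_eq_zero_of_lt, Nat.choose_eq_zero_of_lt (by omega : 1 < m+2),
      Nat.choose_eq_zero_of_lt (by omega : 1 < m+1+2), Nat.choose_eq_zero_of_lt (by omega : 3 < m+1+3)]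

lemma Mm_closed (n : ℕ) (hn : 1 ≤ n) (m : ℕ) :
    Mm n m = ∑ j ∈ Finset.range (n+1),
      (-1 : ℤ) ^ j * ((n+2).choose (m+1+2*j)) * Gg (n - j) := by
  induction n, hn using Nat.le_induction generalizing m with
  | base =>
    rw [show (1:ℕ) = 0+1 from rfl, Mm_rec, Mm_zero_col, Mm_zero_col]
    rw [Finset.sum_range_succ, Finset.sum_range_succ, Finset.sum_range_zero]
    simp only [pow_zero, pow_one, Nat.sub_self, Nat.sub_zero]
    have h3 : ((3:ℕ).choose (m+1+2*1) : ℤ) = ((1:ℕ).choose (m+1) : ℤ) + ((1:ℕ).choose (m+2) : ℤ) := by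
      rw [show m+1+2*1 = m+3 by ring, choose_three]
      push_cast; ring
    have hGg0 : Gg 0 = 1 := by rw [Gg, F_zero]; rfl
    rw [show m+1+2*0 = m+1 by ring, h3, hGg0]
    ring
  | succ n hn ih =>
    rw [Mm_rec, ih (m+1), ih (m+2)]
    rw [Finset.sum_range_succ' (fun j => (-1 : ℤ) ^ j * ((n+1+2).choose (m+1+2*j)) * Gg (n+1 - j))]
    have hterm : ∀ j ∈ Finset.range (n+1),
        (-1 : ℤ) ^ (j+1) * ((n+1+2).choose (m+1+2*(j+1))) * Gg (n+1 - (j+1))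
        = -((-1 : ℤ) ^ j * ((n+2).choose (m+1+1+2*j)) * Gg (n - j))
          - ((-1 : ℤ) ^ j * ((n+2).choose (m+2+1+2*j)) * Gg (n - j)) := by
      intro j hj
      have h1 : n+1-(j+1) = n - j := by omega
      have h2 : (n+1+2).choose (m+1+2*(j+1)) = (n+2).choose (m+1+1+2*j) + (n+2).choose (m+2+1+2*j) := by
        rw [show m+1+2*(j+1) = (m+2+2*j)+1 by ring, show n+1+2 = (n+2)+1 by ring,
          Nat.choose_succ_succ]
        congr 2 <;> omega
      rw [h1, h2, pow_succ]
      push_cast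
      ring
    rw [Finset.sum_congr rfl hterm, Finset.sum_sub_distrib, Finset.sum_neg_distrib]
    simp only [pow_zero, one_mul, Nat.sub_zero, mul_zero, add_zero]
    push_cast
    ring


lemma genFirst_eq (k : ℕ) : genocchiFirst (k+1) = Gg k := by
  rw [genocchiFirst, show 2*(k+1)-1 = 2*k+1 by omega]
  rfl

lemma genSecond_eq (N : ℕ) : genocchiSecond (N+1) = Mm N 0 := by
  rw [genocchiSecond, show 2*(N+1) = 2*N+2 by ring, seidel_even, Mm]
  exact Finset.sum_congr rfl fun q _ => by simp [F]

lemma Mm_one_closed (M : ℕ) :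
    Mm M 1 = ∑ j ∈ Finset.range (M+1), (-1:ℤ)^j * ((M+2).choose (2+2*j)) * Gg (M-j) := by
  match M with
  | 0 =>
    rw [Mm_zero_col]
    simp [Gg, F_zero]
  | (M+1) =>
    rw [Mm_closed _ (by omega) 1]

lemma S2_zero (M : ℕ) :
    ∑ j ∈ Finset.range (M+2), (-1:ℤ)^j * ((M+2).choose (2*j) : ℤ) * Gg (M+1-j) = 0 := by
  rw [Finset.sum_range_succ' (fun j => (-1:ℤ)^j * ((M+2).choose (2*j) : ℤ) * Gg (M+1-j)) (M+1)]
  have hGg : Gg (M+1) = Mm M 1 := Gg_eq_Mm_one M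
  have hpt : ∀ j ∈ Finset.range (M+1),
      (-1:ℤ)^(j+1) * ((M+2).choose (2*(j+1)) : ℤ) * Gg (M+1-(j+1))
      = -((-1:ℤ)^j * ((M+2).choose (2+2*j)) * Gg (M-j)) := by
    intro j hj
    have h1 : M+1-(j+1) = M-j := by omega
    have h2 : 2*(j+1) = 2+2*j := by ring
    rw [h1, h2, pow_succ]
    ring
  rw [Finset.sum_congr rfl hpt, Finset.sum_neg_distrib]
  simp only [pow_zero, one_mul, mul_zero, Nat.sub_zero, Nat.choose_zero_right,
    Nat.cast_one, mul_one]
  rw [hGg, Mm_one_closed]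
  ring

theorem second_kind_from_first (n : ℕ) (hn : 1 ≤ n) :
    genocchiSecond n =
      ∑ j ∈ Finset.range ((n - 1) / 2 + 1),
        (-1 : ℤ) ^ j * (n.choose (2 * j + 1)) * genocchiFirst (n - j) := by
  obtain ⟨N, rfl⟩ : ∃ N, n = N + 1 := ⟨n - 1, by omega⟩
  match N with
  | 0 =>
    -- n = 1
    show genocchiSecond 1 = ∑ j ∈ Finset.range 1, _
    rw [Finset.sum_range_one, genSecond_eq, Mm_zero_col]
    rw [show (0:ℕ)+1-0 = 0+1 from rfl, genFirst_eq]
    simp [Gg, F_zero]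
  | (N+1) =>
    rw [genSecond_eq, Mm_closed _ (by omega) 0]
    have hpas : ∀ j ∈ Finset.range (N+2),
        (-1:ℤ)^j * ((N+1+2).choose (0+1+2*j)) * Gg (N+1-j)
        = (-1:ℤ)^j * ((N+2).choose (2*j+1)) * Gg (N+1-j)
          + (-1:ℤ)^j * ((N+2).choose (2*j)) * Gg (N+1-j) := by
      intro j hj
      rw [show (0+1+2*j) = (2*j)+1 by ring, show N+1+2 = (N+2)+1 by ring,
        Nat.choose_succ_succ]
      push_cast
      ring
    rw [Finset.sum_congr rfl hpas, Finset.sum_add_distrib, S2_zero, add_zero]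
    have hconv : ∀ j ∈ Finset.range ((N+1+1-1)/2+1),
        (-1:ℤ)^j * (((N+1+1).choose (2*j+1) : ℕ) : ℤ) * genocchiFirst (N+1+1-j)
        = (-1:ℤ)^j * ((N+2).choose (2*j+1)) * Gg (N+1-j) := by
      intro j hj
      simp only [Finset.mem_range] at hj
      rw [show N+1+1-j = (N+1-j)+1 by omega, genFirst_eq]
    rw [Finset.sum_congr rfl hconv]
    symm
    refine Finset.sum_subset (fun j hj => ?_) (fun j hj hj' => ?_)
    · simp only [Finset.mem_range] at *
      omega
    · simp only [Finset.mem_range] at *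
      have h0 : N+2 < 2*j+1 := by omega
      rw [Nat.choose_eq_zero_of_lt h0]
      push_cast
      ring
end

section
/- For every n ≥ 0, the Genocchi number of the second kind H_{2n+1} is divisible by 2^n. -/
/-- The Dumont polynomials `C_n`: `C 1 = 1`,
`C_{n+1}(z) = (z+1)^2 C_n(z+1) - z(z+1) C_n(z)`. -/
def dumontC : ℕ → ℤ → ℤ
  | 0, _ => 1
  | 1, _ => 1
  | n + 2, z => (z + 1) ^ 2 * dumontC (n + 1) (z + 1) - z * (z + 1) * dumontC (n + 1) z

/-- `genocchiH n = H_{2n+1}`, the Genocchi numbers of the second kind,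
given by `H_{2n+1} = C_{n+1}(1)`. -/
def genocchiH (n : ℕ) : ℤ := dumontC (n + 1) 1

lemma dumontC_key (n : ℕ) : ∀ z : ℤ,
    (Odd z → (2 : ℤ) ^ n ∣ dumontC (n + 1) z) ∧
    (Even z → (2 : ℤ) ^ n ∣ 2 * dumontC (n + 1) z) := by
  induction n with
  | zero => intro z; simp [dumontC]
  | succ n ih =>
    intro z
    constructor
    · rintro ⟨k, hk⟩
      obtain ⟨a, ha⟩ := (ih (z + 1)).2 ⟨k + 1, by omega⟩
      obtain ⟨b, hb⟩ := (ih z).1 ⟨k, hk⟩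
      refine ⟨(k + 1) ^ 2 * a - (2 * k + 1) * (k + 1) * b, ?_⟩
      show (z + 1) ^ 2 * dumontC (n + 1) (z + 1) - z * (z + 1) * dumontC (n + 1) z = _
      subst hk
      linear_combination (2 * (k + 1) ^ 2) * ha - ((2 * k + 1) * (2 * k + 2)) * hb
    · rintro ⟨k, hk⟩
      obtain ⟨a, ha⟩ := (ih (z + 1)).1 ⟨k, by omega⟩
      obtain ⟨b, hb⟩ := (ih z).2 ⟨k, hk⟩
      refine ⟨(2 * k + 1) ^ 2 * a - (2 * k + 1) * k * b, ?_⟩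
      show 2 * ((z + 1) ^ 2 * dumontC (n + 1) (z + 1) - z * (z + 1) * dumontC (n + 1) z) = _
      subst hk
      linear_combination (2 * (2 * k + 1) ^ 2) * ha - ((2 * k + 1) * 2 * k) * hb

theorem two_pow_dvd_genocchiH (n : ℕ) : (2 : ℤ) ^ n ∣ genocchiH n :=
  (dumontC_key n 1).1 ⟨0, by norm_num⟩
end

section
/- Let F_1(z) = 1 and F_{n+1}(z) = (z+1)^2 F_n(z+1) - z^2 F_n(z) (the Gandhi polynomials). Then for all n ≥ 1, z·F_n(z) = sum_{j=0}^{n} (-1)^{n+j} T(n,j) · j! · (z)^j, where (z)^j = z(z+1)···(z+j-1) is the rising factorial and T(n,j) are the central factorial numbers of the second kind. -/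
/-- Gandhi polynomials: `F 1 = 1`, `F_{n+1}(z) = (z+1)^2 F_n(z+1) - z^2 F_n(z)`. -/
def gandhiF : ℕ → ℚ → ℚ
  | 0, _ => 1
  | 1, _ => 1
  | n + 2, z => (z + 1) ^ 2 * gandhiF (n + 1) (z + 1) - z ^ 2 * gandhiF (n + 1) z

/-- Central factorial numbers of the second kind:
`T(n+1,j) = T(n,j-1) + j^2 T(n,j)`, `T(n,0) = δ_{n,0}`, `T(n,j) = 0` for `n < j`. -/
def centralT : ℕ → ℕ → ℚ
  | 0, 0 => 1
  | 0, _ + 1 => 0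
  | _ + 1, 0 => 0
  | n + 1, j + 1 => centralT n j + ((j : ℚ) + 1) ^ 2 * centralT n (j + 1)

/-- Rising factorial. -/
def pr (j : ℕ) (z : ℚ) : ℚ := ∏ i ∈ Finset.range j, (z + i)

lemma pr_succ (j : ℕ) (z : ℚ) : pr (j + 1) z = pr j z * (z + j) :=
  Finset.prod_range_succ _ _

lemma pr_shift (j : ℕ) (z : ℚ) : z * pr j (z + 1) = pr (j + 1) z := by
  unfold pr
  rw [Finset.prod_range_succ']
  push_cast
  rw [mul_comm]
  congr 1
  · apply Finset.prod_congr rfl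
    intro i _
    ring
  · norm_num

lemma centralT_eq_zero : ∀ n j : ℕ, n < j → centralT n j = 0 := by
  intro n
  induction n with
  | zero =>
    intro j hj
    match j, hj with
    | j + 1, _ => rfl
  | succ n ih =>
    intro j hj
    match j, hj with
    | j + 1, hj =>
      show centralT n j + ((j : ℚ) + 1) ^ 2 * centralT n (j + 1) = 0
      rw [ih j (by omega), ih (j + 1) (by omega)]
      ring

lemma key_term (j : ℕ) (z : ℚ) :
    z * (z + 1) * pr j (z + 1) - z ^ 2 * pr j z =
      ((j : ℚ) + 1) * pr (j + 1) z - (j : ℚ) ^ 2 * pr j z := by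
  have h1 : z * (z + 1) * pr j (z + 1) = (z + 1) * (z * pr j (z + 1)) := by ring
  rw [h1, pr_shift, pr_succ]
  ring

theorem gandhi_central_factorial_rep (n : ℕ) (hn : 1 ≤ n) (z : ℚ) :
    z * gandhiF n z =
      ∑ j ∈ Finset.range (n + 1),
        (-1) ^ (n + j) * centralT n j * (j.factorial : ℚ) *
          ∏ i ∈ Finset.range j, (z + i) := by
  induction n, hn using Nat.le_induction generalizing z with
  | base =>
    have h0 : centralT 1 0 = 0 := rfl
    have h1 : centralT 1 1 = 1 := by
      show centralT 0 0 + ((0 : ℚ) + 1) ^ 2 * centralT 0 1 = 1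
      show (1 : ℚ) + ((0 : ℚ) + 1) ^ 2 * 0 = 1
      ring
    norm_num [gandhiF, Finset.sum_range_succ, Finset.prod_range_succ, h0, h1]
  | succ n hn ih =>
    obtain ⟨m, rfl⟩ := Nat.exists_eq_succ_of_ne_zero (by omega : n ≠ 0)
    simp only [Nat.succ_eq_add_one] at ih ⊢
    -- unfold gandhiF
    have hg : gandhiF (m + 2) z =
        (z + 1) ^ 2 * gandhiF (m + 1) (z + 1) - z ^ 2 * gandhiF (m + 1) z := rfl
    -- abbreviations
    set N := m + 1 with hN
    have step1 : z * gandhiF (N + 1) z =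
        z * (z + 1) * ((z + 1) * gandhiF N (z + 1)) - z ^ 2 * (z * gandhiF N z) := by
      rw [show N + 1 = m + 2 from rfl, hg]; ring
    rw [step1, ih (z + 1), ih z]
    -- now pure sum manipulation
    rw [Finset.mul_sum, Finset.mul_sum, ← Finset.sum_sub_distrib]
    have hterm : ∀ j ∈ Finset.range (N + 1),
        z * (z + 1) * ((-1) ^ (N + j) * centralT N j * (j.factorial : ℚ) *
            ∏ i ∈ Finset.range j, (z + 1 + i)) -
          z ^ 2 * ((-1) ^ (N + j) * centralT N j * (j.factorial : ℚ) *
            ∏ i ∈ Finset.range j, (z + i)) =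
        (-1) ^ (N + j) * centralT N j * (j.factorial : ℚ) *
          (((j : ℚ) + 1) * pr (j + 1) z - (j : ℚ) ^ 2 * pr j z) := by
      intro j _
      have := key_term j z
      have e1 : (∏ i ∈ Finset.range j, (z + 1 + i)) = pr j (z + 1) := rfl
      have e2 : (∏ i ∈ Finset.range j, (z + i)) = pr j z := rfl
      rw [e1, e2, ← this]
      ring
    rw [Finset.sum_congr rfl hterm]
    -- split into two sums
    have split : ∑ j ∈ Finset.range (N + 1),
        (-1) ^ (N + j) * centralT N j * (j.factorial : ℚ) *
          (((j : ℚ) + 1) * pr (j + 1) z - (j : ℚ) ^ 2 * pr j z) =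
        (∑ j ∈ Finset.range (N + 1),
          (-1) ^ (N + j) * centralT N j * (j.factorial : ℚ) * ((j : ℚ) + 1) * pr (j + 1) z) -
        (∑ j ∈ Finset.range (N + 1),
          (-1) ^ (N + j) * centralT N j * (j.factorial : ℚ) * (j : ℚ) ^ 2 * pr j z) := by
      rw [← Finset.sum_sub_distrib]
      exact Finset.sum_congr rfl fun j _ => by ring
    rw [split]
    -- reindex the second sum
    have reidx : (∑ j ∈ Finset.range (N + 1),
          (-1) ^ (N + j) * centralT N j * (j.factorial : ℚ) * (j : ℚ) ^ 2 * pr j z) =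
        ∑ j ∈ Finset.range (N + 1),
          (-1) ^ (N + (j + 1)) * centralT N (j + 1) * ((j + 1).factorial : ℚ) *
            ((j : ℚ) + 1) ^ 2 * pr (j + 1) z := by
      rw [Finset.sum_range_succ' (fun j => (-1 : ℚ) ^ (N + j) * centralT N j *
        (j.factorial : ℚ) * (j : ℚ) ^ 2 * pr j z) N]
      rw [Finset.sum_range_succ (fun j => (-1 : ℚ) ^ (N + (j + 1)) * centralT N (j + 1) *
        ((j + 1).factorial : ℚ) * ((j : ℚ) + 1) ^ 2 * pr (j + 1) z) N]
      have hz : centralT N (N + 1) = 0 := centralT_eq_zero N (N + 1) (by omega)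
      simp only [hz]
      push_cast
      ring_nf
    rw [reidx, ← Finset.sum_sub_distrib]
    -- RHS: peel off the j = 0 term
    rw [Finset.sum_range_succ' (fun j => (-1 : ℚ) ^ (N + 1 + j) * centralT (N + 1) j *
      (j.factorial : ℚ) * ∏ i ∈ Finset.range j, (z + (i : ℚ))) (N + 1)]
    have h00 : centralT (N + 1) 0 = 0 := rfl
    rw [h00]
    simp only [mul_zero, zero_mul, add_zero]
    apply Finset.sum_congr rfl
    intro j _
    have e3 : (∏ i ∈ Finset.range (j + 1), (z + (i : ℚ))) = pr (j + 1) z := rfl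
    have hrec : centralT (N + 1) (j + 1) =
        centralT N j + ((j : ℚ) + 1) ^ 2 * centralT N (j + 1) := rfl
    rw [e3, hrec]
    have hfac : (((j + 1).factorial : ℚ)) = ((j : ℚ) + 1) * (j.factorial : ℚ) := by
      push_cast [Nat.factorial_succ]; ring
    rw [hfac]
    ring
end

section
/- Let a_1, a_2 be arbitrary numbers, let f(z), g(z) be polynomials of degree at most 2, and let (a_n)_{n≥1} be a sequence extending a_1, a_2. Define R(p)(z) = f(z)·p(z+1) − g(z)·p(z). Then R((z)^n) = −a_n (z)^n + (n+1)(z)^{n+1} holds for all n ≥ 1 if and only if f(z) = z(z + 4 + a_1 − a_2), g(z) = z^2 + (3 + a_1 − a_2)z + 2 + 2a_1 − a_2, and a_n = −a_1(n−2) + a_2(n−1) + (n−2)(n−1) for all n ≥ 3. -/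
open Polynomial

/-- The rising factorial `(z)^n = z(z+1)⋯(z+n-1)` as a polynomial. -/
noncomputable def risingFact (n : ℕ) : ℚ[X] := ∏ i ∈ Finset.range n, (X + C (i : ℚ))

lemma rf_succ (n : ℕ) : risingFact (n+1) = risingFact n * (X + C (n:ℚ)) :=
  Finset.prod_range_succ _ n

lemma rf_monic (n : ℕ) : (risingFact n).Monic :=
  monic_prod_of_monic _ _ fun i _ => monic_X_add_C _

lemma rf_ne (n : ℕ) : risingFact n ≠ 0 := (rf_monic n).ne_zero

lemma rf_comp (n : ℕ) : X * (risingFact n).comp (X + 1) = risingFact (n+1) := by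
  rw [risingFact, risingFact, Polynomial.prod_comp, Finset.prod_range_succ']
  simp only [add_comp, X_comp, C_comp, Nat.cast_zero, C_0, add_zero, Nat.cast_add,
    Nat.cast_one, C_add, C_1]
  rw [mul_comm]
  congr 1
  exact Finset.prod_congr rfl fun i _ => by ring

/-- `R(p)(z) = f(z) p(z+1) - g(z) p(z)` satisfies
`R((z)^n) = -a_n (z)^n + (n+1)(z)^{n+1}` for all `n ≥ 1` iff
`f(z) = z(z + 4 + a_1 - a_2)`, `g(z) = z^2 + (3 + a_1 - a_2)z + 2 + 2a_1 - a_2`, and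
`a_n = -a_1(n-2) + a_2(n-1) + (n-2)(n-1)` for all `n ≥ 3`. -/
theorem operator_R_characterization (a : ℕ → ℚ) (f g : ℚ[X])
    (hf : f.degree ≤ 2) (hg : g.degree ≤ 2) :
    (∀ n : ℕ, 1 ≤ n →
        f * ((risingFact n).comp (X + 1)) - g * risingFact n =
          -C (a n) * risingFact n + C ((n : ℚ) + 1) * risingFact (n + 1)) ↔
      (f = X * (X + C (4 + a 1 - a 2)) ∧
        g = X ^ 2 + C (3 + a 1 - a 2) * X + C (2 + 2 * a 1 - a 2) ∧
        ∀ n : ℕ, 3 ≤ n →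
          a n = -a 1 * ((n : ℚ) - 2) + a 2 * ((n : ℚ) - 1) + ((n : ℚ) - 2) * ((n : ℚ) - 1)) := by
  constructor
  · intro h
    have hX1 : (X + 1 : ℚ[X]) ≠ 0 := fun hh => by
      have := congrArg (eval 0) hh; simp at this
    have hX : (X : ℚ[X]) ≠ 0 := X_ne_zero
    have r1 : risingFact 1 = X := by simp [risingFact]
    have r2 : risingFact 2 = X * (X + 1) := by
      simp [risingFact, Finset.prod_range_succ]
    have r3 : risingFact 3 = X * (X + 1) * (X + 2) := by
      simp [risingFact, Finset.prod_range_succ]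
    have h1 := h 1 le_rfl
    have h2 := h 2 (by norm_num)
    norm_num at h1 h2
    simp only [r1, r2, r3] at h1 h2
    simp only [X_comp, mul_comp, add_comp, one_comp, Nat.cast_one, Nat.cast_ofNat, C_add, C_1,
      map_ofNat] at h1 h2
    have hfe : f = X * (X + C (4 + a 1 - a 2)) := by
      have : f * (X + 1) = (X * (X + C (4 + a 1 - a 2))) * (X + 1) := by
        simp only [C_add, C_sub, map_ofNat]
        linear_combination h2 - (X + 1) * h1
      exact mul_right_cancel₀ hX1 this
    have hfe' : f = X * (X + (4 + C (a 1) - C (a 2))) := by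
      rw [hfe]; simp only [C_add, C_sub, map_ofNat]
    have hge : g = X ^ 2 + C (3 + a 1 - a 2) * X + C (2 + 2 * a 1 - a 2) := by
      have : g * X = (X ^ 2 + C (3 + a 1 - a 2) * X + C (2 + 2 * a 1 - a 2)) * X := by
        simp only [C_add, C_sub, C_mul, map_ofNat]
        linear_combination -h1 + (X + 1) * hfe'
      exact mul_right_cancel₀ hX this
    refine ⟨hfe, hge, ?_⟩
    intro n hn
    have hh := h n (by omega)
    rw [hfe, show X * (X + C (4 + a 1 - a 2)) * ((risingFact n).comp (X + 1)) =
        (X + C (4 + a 1 - a 2)) * (X * (risingFact n).comp (X + 1)) from by ring,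
      rf_comp, rf_succ, hge] at hh
    have key : C (a n) * risingFact n =
        C (-a 1 * ((n : ℚ) - 2) + a 2 * ((n : ℚ) - 1) + ((n : ℚ) - 2) * ((n : ℚ) - 1)) *
          risingFact n := by
      simp only [C_add, C_sub, C_mul, C_neg, map_ofNat, C_1] at hh ⊢
      linear_combination hh
    exact C_inj.mp (mul_right_cancel₀ (rf_ne n) key)
  · rintro ⟨hf', hg', ha⟩
    intro n hn
    have key : a n = -a 1 * ((n : ℚ) - 2) + a 2 * ((n : ℚ) - 1) +
        ((n : ℚ) - 2) * ((n : ℚ) - 1) := by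
      match n, hn with
      | 1, _ => norm_num
      | 2, _ => norm_num
      | (m+3), _ => exact ha (m+3) (by omega)
    have hS : f * ((risingFact n).comp (X + 1)) = (X + C (4 + a 1 - a 2)) * risingFact (n+1) := by
      rw [hf', ← rf_comp]; ring
    rw [hS, rf_succ, hg', key]
    simp only [C_add, C_sub, C_mul, C_neg, map_ofNat, C_1]
    ring
end

section
/- For each n ≥ 2, the polynomial g_n(v) := F_n^{(v)}(v), regarded as a polynomial in v, is divisible by (v+1), where F_n^{(v)}(z) is defined by F_1^{(v)}(z) = 1 and F_{n+1}^{(v)}(z) = (z+1)(z−v+1) F_n^{(v)}(z+1) − z(z−v) F_n^{(v)}(z). -/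
open Polynomial

/-- `F_n^{(v)}(z)` as a polynomial in `z` (outer variable `X`) whose coefficients are
polynomials in `v` (inner variable): `F_1 = 1`,
`F_{n+1}(z) = (z+1)(z-v+1) F_n(z+1) - z(z-v) F_n(z)`. -/
noncomputable def FvPoly : ℕ → Polynomial (Polynomial ℚ)
  | 0 => 1
  | 1 => 1
  | n + 2 =>
      (X + 1) * (X - C Polynomial.X + 1) * ((FvPoly (n + 1)).comp (X + 1)) -
        X * (X - C Polynomial.X) * FvPoly (n + 1)

/-- `g_n(v) = F_n^{(v)}(v)`, a polynomial in `v`. -/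
noncomputable def gPoly (n : ℕ) : Polynomial ℚ := (FvPoly n).eval Polynomial.X

lemma Polynomial.eval_eval_X {R : Type*} [CommSemiring R] (p : R[X][X]) (a : R) :
    (p.eval X).eval a = p.evalEval a a := by
  rw [← eval₂_evalRingHom, ← coe_evalRingHom, eval, hom_eval₂, RingHom.comp_id, coe_evalRingHom,
    eval_X]

/-- At `z = v = -1` the first term of the recursion vanishes through `z + 1` and the second
through `z - v`. -/
lemma FvPoly_evalEval_neg_one (n : ℕ) : (FvPoly (n + 2)).evalEval (-1) (-1) = 0 := by
  simp [FvPoly, evalEval_C]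

theorem vAddOne_dvd_gPoly (n : ℕ) (hn : 2 ≤ n) : (X + 1 : Polynomial ℚ) ∣ gPoly n := by
  obtain ⟨m, rfl⟩ := Nat.exists_eq_add_of_le' hn
  rw [← sub_neg_eq_add, ← C_1, ← C_neg, dvd_iff_isRoot, IsRoot, gPoly, eval_eval_X]
  exact FvPoly_evalEval_neg_one m
end
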